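/- arXiv:1612.05025 — 2 statements merged into one kernel-verified Lean document; each statement's English description precedes it below -/
import Mathlib

section
/- (Berman–Higman) Let G be a finite group and u a torsion unit of the integral group ring ℤG with augmentation 1 and u ≠ 1. Then the coefficient of the identity element in u is zero. -/
/-!
The left regular representation of `ℂG` turns a torsion unit `u` into an endomorphism `L` of
finite order, whose eigenvalues are therefore roots of unity, and `trace L = |G| · u₁`. Counting
eigenvalues gives `|u₁| ≤ 1`, so if `u₁ ≠ 0` then `u₁ = ±1` and `u₁ • L` has trace
`|G| = dim ℂG`. A sum of `|G|` roots of unity equals `|G|` only if all of them are `1`, so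
`u₁ • L - 1` is nilpotent; it is also semisimple since `L` has finite order, hence `u₁ • L = 1`,
i.e. `u = u₁ • 1`, and augmentation `1` forces `u = 1`.
-/

open Polynomial Module

theorem Complex.eq_one_of_norm_le_one_of_one_le_re {z : ℂ} (hn : ‖z‖ ≤ 1) (hre : 1 ≤ z.re) :
    z = 1 := by
  have hsq : z.re * z.re + z.im * z.im ≤ 1 := by
    rw [← Complex.normSq_apply, Complex.normSq_eq_norm_sq]
    nlinarith [norm_nonneg z]
  apply Complex.ext <;> simp <;> nlinarith

theorem norm_multiset_sum_le_card {E : Type*} [SeminormedAddCommGroup E] {s : Multiset E}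
    (hs : ∀ x ∈ s, ‖x‖ ≤ 1) : ‖s.sum‖ ≤ Multiset.card s := by
  simpa using (norm_multiset_sum_le s).trans (Multiset.sum_le_card_nsmul _ 1 (by simpa using hs))

theorem Complex.eq_one_of_mem_of_sum_eq_card {s : Multiset ℂ} (hs : ∀ z ∈ s, ‖z‖ ≤ 1)
    (hsum : s.sum = Multiset.card s) {z : ℂ} (hz : z ∈ s) : z = 1 := by
  obtain ⟨t, rfl⟩ := Multiset.exists_cons_of_mem hz
  have ht : ‖t.sum‖ ≤ Multiset.card t :=
    norm_multiset_sum_le_card fun x hx => hs x (Multiset.mem_cons_of_mem hx)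
  have hre := congrArg Complex.re hsum
  simp only [Multiset.sum_cons, Multiset.card_cons, Complex.add_re, Nat.cast_add, Nat.cast_one,
    Complex.natCast_re, Complex.one_re] at hre
  exact eq_one_of_norm_le_one_of_one_le_re (hs z (Multiset.mem_cons_self z t))
    (by linarith [Complex.re_le_norm t.sum])

namespace Module.End

variable {K V : Type*} [Field K] [AddCommGroup V] [Module K V]

theorem eq_one_of_pow_eq_one_of_isNilpotent_sub_one {f : End K V} {n : ℕ} (hf : f ^ n = 1)
    (hn : (n : K) ≠ 0) (hnil : IsNilpotent (f - 1)) : f = 1 := by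
  have hss : f.IsSemisimple :=
    isSemisimple_of_squarefree_aeval_eq_zero (separable_X_pow_sub_C 1 hn one_ne_zero).squarefree
      (by simp [hf])
  have hss_sub := (isSemisimple_sub_algebraMap_iff (μ := (1 : K))).mpr hss
  rw [map_one] at hss_sub
  exact sub_eq_zero.mp (eq_zero_of_isNilpotent_isSemisimple hnil hss_sub)

variable [FiniteDimensional K V] {f : End K V}

theorem card_roots_charpoly [IsAlgClosed K] : Multiset.card f.charpoly.roots = finrank K V := by
  rw [← (IsAlgClosed.splits f.charpoly).natDegree_eq_card_roots, LinearMap.charpoly_natDegree]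

theorem isNilpotent_sub_one_of_roots_charpoly (hsplit : f.charpoly.Splits)
    (hroots : ∀ μ ∈ f.charpoly.roots, μ = 1) : IsNilpotent (f - 1) := by
  refine ⟨finrank K V, ?_⟩
  have hcp : f.charpoly = (X - C 1) ^ finrank K V := by
    rw [hsplit.eq_prod_roots_of_monic f.charpoly_monic,
      Multiset.eq_replicate.mpr ⟨?_, hroots⟩, Multiset.map_replicate, Multiset.prod_replicate]
    rw [← hsplit.natDegree_eq_card_roots, LinearMap.charpoly_natDegree]
  simpa [hcp] using f.aeval_self_charpoly

variable [Module ℂ V] [FiniteDimensional ℂ V] {f : End ℂ V} {n : ℕ}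

theorem norm_eq_one_of_mem_roots_charpoly (hf : f ^ n = 1) (hn : n ≠ 0) {μ : ℂ}
    (hμ : μ ∈ f.charpoly.roots) : ‖μ‖ = 1 := by
  obtain ⟨v, hv⟩ :=
    ((hasEigenvalue_iff_isRoot_charpoly f μ).mpr (isRoot_of_mem_roots hμ)).exists_hasEigenvector
  have hμn : μ ^ n • v = (1 : ℂ) • v := by rw [← hv.pow_apply, hf, one_smul]; rfl
  exact Complex.norm_eq_one_of_pow_eq_one (smul_left_injective ℂ hv.2 hμn) hn

theorem norm_trace_le_finrank (hf : f ^ n = 1) (hn : n ≠ 0) :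
    ‖LinearMap.trace ℂ V f‖ ≤ finrank ℂ V := by
  rw [trace_eq_sum_roots_charpoly_of_splits (IsAlgClosed.splits _), ← card_roots_charpoly]
  exact norm_multiset_sum_le_card fun μ hμ => (norm_eq_one_of_mem_roots_charpoly hf hn hμ).le

theorem eq_one_of_trace_eq_finrank (hf : f ^ n = 1) (hn : n ≠ 0)
    (htr : LinearMap.trace ℂ V f = finrank ℂ V) : f = 1 := by
  refine eq_one_of_pow_eq_one_of_isNilpotent_sub_one hf (Nat.cast_ne_zero.mpr hn) ?_
  refine isNilpotent_sub_one_of_roots_charpoly (IsAlgClosed.splits _) fun μ hμ => ?_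
  refine Complex.eq_one_of_mem_of_sum_eq_card (fun ν hν => ?_) ?_ hμ
  · exact (norm_eq_one_of_mem_roots_charpoly hf hn hν).le
  · rw [← trace_eq_sum_roots_charpoly_of_splits (IsAlgClosed.splits _), htr, card_roots_charpoly]

end Module.End

namespace MonoidAlgebra

variable {G : Type*} [Fintype G]

theorem finrank_complex : finrank ℂ (MonoidAlgebra ℂ G) = Fintype.card G := by
  simpa using finrank_eq_card_basis (basis G ℂ)

variable [Group G]

theorem trace_lmul {k : Type*} [CommRing k] (x : MonoidAlgebra k G) :
    LinearMap.trace k _ (Algebra.lmul k (MonoidAlgebra k G) x) = Fintype.card G • x.coeff 1 := by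
  classical
  rw [LinearMap.trace_eq_matrix_trace k (basis G k), Matrix.trace]
  simp [LinearMap.toMatrix_apply, basis, coeffLinearEquiv]

variable {x : MonoidAlgebra ℂ G} {n : ℕ}

theorem norm_coeff_one_le_one_of_pow_eq_one (hx : x ^ n = 1) (hn : n ≠ 0) : ‖x.coeff 1‖ ≤ 1 := by
  have h := End.norm_trace_le_finrank (f := Algebra.lmul ℂ _ x) (by rw [← map_pow, hx, map_one]) hn
  rw [trace_lmul, finrank_complex, nsmul_eq_mul, norm_mul, Complex.norm_natCast] at h
  exact le_of_mul_le_mul_left (by simpa using h) (by exact_mod_cast Fintype.card_pos)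

theorem eq_one_of_pow_eq_one_of_coeff_one_eq_one (hx : x ^ n = 1) (hn : n ≠ 0)
    (h1 : x.coeff 1 = 1) : x = 1 := by
  refine Algebra.lmul_injective (R := ℂ) ?_
  rw [map_one]
  refine End.eq_one_of_trace_eq_finrank (n := n) (by rw [← map_pow, hx, map_one]) hn ?_
  rw [trace_lmul, finrank_complex, h1, nsmul_one]

theorem coeff_one_smul_eq_one_of_pow_eq_one {u : MonoidAlgebra ℤ G} (hu : u ^ n = 1)
    (hn : n ≠ 0) (h1 : u.coeff 1 ≠ 0) : u.coeff 1 • u = 1 := by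
  set a := u.coeff 1
  let ψ := mapRingHom G (Int.castRingHom ℂ)
  have hψ : Function.Injective ψ :=
    map_injective (Int.castRingHom ℂ).toAddMonoidHom Int.cast_injective
  have hψu : ψ u ^ n = 1 := by rw [← map_pow, hu, map_one]
  have ha_sq : a * a = 1 := by
    have h := norm_coeff_one_le_one_of_pow_eq_one hψu hn
    rw [coeff_mapRingHom, eq_intCast, Complex.norm_intCast] at h
    have : |a| ≤ 1 := by exact_mod_cast h
    rw [← abs_mul_abs_self, le_antisymm this (Int.one_le_abs h1), one_mul]
  have hε : (a : ℂ) * a = 1 := by exact_mod_cast ha_sq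
  refine hψ ?_
  rw [map_one]
  refine eq_one_of_pow_eq_one_of_coeff_one_eq_one (n := 2 * n) ?_ (by omega) ?_
  · rw [map_zsmul, ← Int.cast_smul_eq_zsmul ℂ, _root_.smul_pow, pow_mul, pow_mul', hψu, one_pow,
      sq, hε, one_pow, one_smul]
  · rw [map_zsmul, coeff_smul_apply, coeff_mapRingHom, eq_intCast, zsmul_eq_mul, hε]

end MonoidAlgebra

/-- Berman–Higman -/
theorem stmt_5 {G : Type*} [Group G] [Fintype G]
    (u : (MonoidAlgebra ℤ G)ˣ) (hfin : IsOfFinOrder u)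
    (haug : ∑ g : G, (u : MonoidAlgebra ℤ G).coeff g = 1)
    (hne : u ≠ 1) :
    (u : MonoidAlgebra ℤ G).coeff 1 = 0 := by
  by_contra ha
  obtain ⟨n, hn, hun⟩ := hfin.exists_pow_eq_one
  have hau := MonoidAlgebra.coeff_one_smul_eq_one_of_pow_eq_one
    (by rw [← Units.val_pow_eq_pow_val, hun, Units.val_one]) hn.ne' ha
  have ha_one : (u : MonoidAlgebra ℤ G).coeff 1 = 1 := by
    have := congrArg (fun x : MonoidAlgebra ℤ G => ∑ g, x.coeff g) hau
    simp only [MonoidAlgebra.coeff_smul_apply, smul_eq_mul, ← Finset.mul_sum, haug, mul_one] at this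
    simpa [MonoidAlgebra.one_def, Finsupp.single_apply] using this
  exact hne (Units.ext (by simpa [ha_one] using hau))
end

section
/- Let G be a finite group and u ∈ ℤG. Then the image of u^q in the quotient ℤG/([ℤG,ℤG] + qℤG) depends only on the image of u; equivalently, if u ≡ v mod [ℤG,ℤG] + qℤG, then u^q ≡ v^q mod [ℤG,ℤG] + qℤG, for any prime q. -/
/-- The additive subgroup `[ℤG, ℤG]` generated by additive commutators `x*y - y*x`. -/
noncomputable def addCommutatorSubgroup (G : Type*) [Group G] : AddSubgroup (MonoidAlgebra ℤ G) :=
  AddSubgroup.closure {z | ∃ x y : MonoidAlgebra ℤ G, z = x * y - y * x}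

/-- The additive subgroup `qℤG` of multiples of `q`. -/
noncomputable def qMultiples (G : Type*) [Group G] (q : ℕ) : AddSubgroup (MonoidAlgebra ℤ G) :=
  AddSubgroup.closure {z | ∃ w : MonoidAlgebra ℤ G, z = q • w}

/-!
Let `T = [ℤG, ℤG] + qℤG`. Expanding `(∑ fᵢ)^q` in any ring gives a sum over words of length `q`.
Rotating a word changes its product by a commutator, and a non-constant word has exactly `q`
rotations, so each non-trivial rotation orbit contributes `q • (word) ∈ T`; only the constant
words survive: `(∑ fᵢ)^q ≡ ∑ fᵢ^q (mod T)`. In `ℤG`, with Fermat's little theorem on the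
coefficients, this gives `u^q ≡ ψ u (mod T)` for the additive map `ψ : g ↦ g^q`. Since `(gh)^q`
and `(hg)^q` are conjugate, `ψ` maps `T` into itself, hence `u^q - v^q ≡ ψ (u - v) ≡ 0`.
-/

open Finset AddAction

theorem AddAction.sum_eq_sum_fixedPoints_of_card_eq_prime {H α N : Type*} [AddGroup H] [Fintype H]
    [AddAction H α] [Fintype α] [AddCommMonoid N] [DecidablePred (· ∈ fixedPoints H α)]
    {p : ℕ} (hp : p.Prime) (hH : Fintype.card H = p) (hN : ∀ n : N, p • n = 0)
    {F : α → N} (hF : ∀ (h : H) (a : α), F (h +ᵥ a) = F a) :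
    ∑ a, F a = ∑ a with a ∈ fixedPoints H α, F a := by
  classical
  have orbit_sum : ∀ a₀ : α,
      ∑ a with a ∈ orbit H a₀, F a = ∑ a with a ∈ fixedPoints H α ∧ a ∈ orbit H a₀, F a := by
    intro a₀
    by_cases h₀ : a₀ ∈ fixedPoints H α
    · have horbit : ∀ a, a ∈ orbit H a₀ ↔ a = a₀ := fun a =>
        ⟨fun ⟨h, ha⟩ => ha ▸ h₀ h, fun ha => by rw [ha]; exact mem_orbit_self a₀⟩
      have hfix : ∀ a, a ∈ fixedPoints H α ∧ a ∈ orbit H a₀ ↔ a = a₀ := fun a => by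
        rw [horbit]
        exact ⟨And.right, fun ha => ⟨ha ▸ h₀, ha⟩⟩
      rw [filter_congr fun a _ => horbit a, filter_congr fun a _ => hfix a]
    · have hcard : Fintype.card (orbit H a₀) = p := by
        have hdvd : Fintype.card (orbit H a₀) ∣ p :=
          hH ▸ Dvd.intro _ (card_orbit_mul_card_stabilizer_eq_card_addGroup H a₀)
        exact ((Nat.dvd_prime hp).1 hdvd).resolve_left
          fun h1 => h₀ (mem_fixedPoints_iff_card_orbit_eq_one.2 h1)
      have hempty : ∀ a, ¬ (a ∈ fixedPoints H α ∧ a ∈ orbit H a₀) := by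
        rintro a ⟨ha, h, rfl⟩
        have e : -h +ᵥ (h +ᵥ a₀) = h +ᵥ a₀ := ha (-h)
        rw [neg_vadd_vadd] at e
        exact h₀ (e ▸ ha)
      have hconst : ∀ a ∈ ({a | a ∈ orbit H a₀} : Finset α), F a = F a₀ := fun a ha => by
        obtain ⟨h, rfl⟩ := (mem_filter.1 ha).2
        exact hF h a₀
      rw [filter_false_of_mem fun a _ => hempty a, sum_empty, sum_congr rfl hconst, sum_const,
        Set.filter_mem_univ_eq_toFinset, Set.toFinset_card, hcard, hN]
  calc ∑ a, F a = ∑ ω : orbitRel.Quotient H α, ∑ a with Quotient.mk _ a = ω, F a :=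
        (sum_fiberwise _ _ _).symm
    _ = ∑ ω : orbitRel.Quotient H α, ∑ a with a ∈ fixedPoints H α ∧ Quotient.mk _ a = ω, F a := by
        refine Fintype.sum_congr _ _ fun ω => ?_
        induction ω using Quotient.inductionOn with
        | h a₀ => simpa only [Quotient.eq, orbitRel_apply] using orbit_sum a₀
    _ = ∑ a with a ∈ fixedPoints H α, F a := by
        simp only [← filter_filter]
        exact sum_fiberwise _ _ _

theorem List.prod_rotate_sub_prod_mem {R : Type*} [Ring R] {T : AddSubgroup R}
    (hcomm : ∀ a b : R, a * b - b * a ∈ T) (l : List R) (n : ℕ) :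
    (l.rotate n).prod - l.prod ∈ T := by
  set m := n % l.length
  have hl : l.prod = (l.take m).prod * (l.drop m).prod := by
    rw [← List.prod_append, List.take_append_drop]
  rw [List.rotate_eq_drop_append_take_mod, List.prod_append, hl]
  exact hcomm _ _

theorem sum_pow_eq_sum_prod_ofFn {R ι : Type*} [Semiring R] [Fintype ι] (f : ι → R) (n : ℕ) :
    (∑ i, f i) ^ n = ∑ w : Fin n → ι, (List.ofFn fun j => f (w j)).prod := by
  induction n with
  | zero => simp
  | succ n ih =>
    rw [pow_succ', ih, sum_mul_sum, ← Fintype.sum_prod_type']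
    exact Fintype.sum_equiv (Fin.consEquiv fun _ => ι) _ _ fun _ => by simp [List.ofFn_succ]

section Rotation

-- `Fin n` acts on words `w : Fin n → β` by rotation: `(k +ᵥ w) i = w (-k + i)`.
attribute [local instance] arrowAddAction

theorem List.ofFn_vadd_eq_rotate {β : Type*} {n : ℕ} [NeZero n] (w : Fin n → β) (k : Fin n) :
    List.ofFn (k +ᵥ w) = (List.ofFn w).rotate (-k).val := by
  refine List.ext_getElem (by simp) fun j h₁ _ => ?_
  simp only [List.getElem_ofFn, List.getElem_rotate, List.length_ofFn]
  show w (-k + _) = _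
  congr 1
  ext
  simp [Fin.val_add, add_comm]

theorem mem_fixedPoints_arrowAddAction_iff {β : Type*} {n : ℕ} [NeZero n] {w : Fin n → β} :
    w ∈ fixedPoints (Fin n) (Fin n → β) ↔ ∃ b, w = fun _ => b := by
  constructor
  · intro hw
    refine ⟨w 0, funext fun i => ?_⟩
    have : w (- -i + 0) = w 0 := congrFun (hw (-i)) 0
    simpa using this
  · rintro ⟨b, rfl⟩ k
    rfl

theorem sum_pow_sub_sum_pow_mem {R ι : Type*} [Ring R] [Fintype ι] {T : AddSubgroup R}
    (hcomm : ∀ a b : R, a * b - b * a ∈ T) {p : ℕ} (hp : p.Prime) (hpT : ∀ r : R, p • r ∈ T)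
    (f : ι → R) : (∑ i, f i) ^ p - ∑ i, f i ^ p ∈ T := by
  classical
  have : NeZero p := ⟨hp.ne_zero⟩
  set W : (Fin p → ι) → R ⧸ T := fun w => ((List.ofFn fun j => f (w j)).prod : R ⧸ T)
  have hN : ∀ x : R ⧸ T, p • x = 0 := fun x => by
    induction x using QuotientAddGroup.induction_on with
    | H r => rw [← QuotientAddGroup.mk_nsmul, QuotientAddGroup.eq_zero_iff]; exact hpT r
  have hW : ∀ (k : Fin p) w, W (k +ᵥ w) = W w := fun k w => by
    simp only [W, QuotientAddGroup.eq_iff_sub_mem]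
    rw [show (List.ofFn fun j => f ((k +ᵥ w) j)) = List.ofFn (k +ᵥ fun j => f (w j)) from rfl,
      List.ofFn_vadd_eq_rotate]
    exact List.prod_rotate_sub_prod_mem hcomm _ _
  have key := AddAction.sum_eq_sum_fixedPoints_of_card_eq_prime hp (Fintype.card_fin p) hN hW
  have hfixed : ∑ w with w ∈ fixedPoints (Fin p) (Fin p → ι), W w =
      ∑ i, ((f i ^ p : R) : R ⧸ T) := by
    have hfilter : ({w | w ∈ fixedPoints (Fin p) (Fin p → ι)} : Finset _) =
        univ.image fun i _ => i := by
      ext w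
      simp only [mem_filter, mem_univ, true_and, mem_image, mem_fixedPoints_arrowAddAction_iff,
        eq_comm]
    rw [hfilter, sum_image fun i _ j _ h => congrFun h 0]
    simp [W, List.ofFn_const, List.prod_replicate]
  rw [← QuotientAddGroup.eq_iff_sub_mem, sum_pow_eq_sum_prod_ofFn, QuotientAddGroup.mk_sum,
    QuotientAddGroup.mk_sum]
  exact key.trans hfixed

end Rotation

namespace MonoidAlgebra

theorem mapDomain_pow_commutator_mem {k M : Type*} [CommRing k] [Monoid M]
    {T : AddSubgroup (MonoidAlgebra k M)} (hcomm : ∀ a b : MonoidAlgebra k M, a * b - b * a ∈ T)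
    (n : ℕ) (x y : MonoidAlgebra k M) :
    mapDomainLinearMap k k (· ^ n) (x * y - y * x) ∈ T := by
  induction x using induction_linear with
  | zero => simp
  | add f g hf hg =>
    rw [add_mul, mul_add, add_sub_add_comm, map_add]
    exact T.add_mem hf hg
  | single g a =>
    induction y using induction_linear with
    | zero => simp
    | add f₁ f₂ h₁ h₂ =>
      rw [add_mul, mul_add, add_sub_add_comm, map_add]
      exact T.add_mem h₁ h₂
    | single h b =>
      rw [single_mul_single, single_mul_single, map_sub, mapDomainLinearMap_single,
        mapDomainLinearMap_single, mul_comm b a]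
      cases n with
      | zero => simp
      | succ m =>
        have e₁ : (g * h) ^ (m + 1) = g * ((h * g) ^ m * h) := by
          rw [pow_succ, ← mul_assoc, mul_pow_mul, mul_assoc]
        have e₂ : (h * g) ^ (m + 1) = (h * g) ^ m * h * g := by
          rw [pow_succ, mul_assoc]
        have := hcomm (single g 1) (single ((h * g) ^ m * h) (a * b))
        rwa [single_mul_single, single_mul_single, one_mul, mul_one, ← e₁, ← e₂] at this

theorem pow_sub_mapDomain_pow_mem {M : Type*} [Monoid M] {T : AddSubgroup (MonoidAlgebra ℤ M)}
    (hcomm : ∀ a b : MonoidAlgebra ℤ M, a * b - b * a ∈ T) {p : ℕ} (hp : p.Prime)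
    (hpT : ∀ r : MonoidAlgebra ℤ M, p • r ∈ T) (u : MonoidAlgebra ℤ M) :
    u ^ p - mapDomainLinearMap ℤ ℤ (· ^ p) u ∈ T := by
  induction u using induction_linear with
  | zero => simp [zero_pow hp.ne_zero]
  | add f g hf hg =>
    have hfg : (f + g) ^ p - (f ^ p + g ^ p) ∈ T := by
      simpa using sum_pow_sub_sum_pow_mem hcomm hp hpT ![f, g]
    convert T.add_mem (T.add_mem hfg hf) hg using 1
    rw [map_add]
    abel
  | single g a =>
    obtain ⟨c, hc⟩ := Int.prime_dvd_pow_self_sub hp a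
    rw [single_pow, mapDomainLinearMap_single, ← single_sub, hc, ← smul_eq_mul, ← smul_single,
      natCast_zsmul]
    exact hpT _

end MonoidAlgebra

section GroupRing

variable {G : Type*} [Group G] {q : ℕ}

theorem commutator_mem_addCommutatorSubgroup_sup (x y : MonoidAlgebra ℤ G) :
    x * y - y * x ∈ addCommutatorSubgroup G ⊔ qMultiples G q :=
  AddSubgroup.mem_sup_left (AddSubgroup.subset_closure ⟨x, y, rfl⟩)

theorem nsmul_mem_addCommutatorSubgroup_sup (w : MonoidAlgebra ℤ G) :
    q • w ∈ addCommutatorSubgroup G ⊔ qMultiples G q :=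
  AddSubgroup.mem_sup_right (AddSubgroup.subset_closure ⟨w, rfl⟩)

theorem mapDomain_pow_mem_addCommutatorSubgroup_sup (n : ℕ) {t : MonoidAlgebra ℤ G}
    (ht : t ∈ addCommutatorSubgroup G ⊔ qMultiples G q) :
    MonoidAlgebra.mapDomainLinearMap ℤ ℤ (· ^ n) t ∈ addCommutatorSubgroup G ⊔ qMultiples G q := by
  set ψ := (MonoidAlgebra.mapDomainLinearMap ℤ ℤ (· ^ n : G → G)).toAddMonoidHom
  refine (sup_le ?_ ?_ : _ ≤ (addCommutatorSubgroup G ⊔ qMultiples G q).comap ψ) ht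
  · refine (AddSubgroup.closure_le _).2 ?_
    rintro _ ⟨x, y, rfl⟩
    exact MonoidAlgebra.mapDomain_pow_commutator_mem commutator_mem_addCommutatorSubgroup_sup n x y
  · refine (AddSubgroup.closure_le _).2 ?_
    rintro _ ⟨w, rfl⟩
    simpa only [Set.mem_preimage, SetLike.mem_coe, AddSubgroup.coe_comap, map_nsmul]
      using nsmul_mem_addCommutatorSubgroup_sup (ψ w)

end GroupRing

theorem stmt_7_general {G : Type*} [Group G] (q : ℕ) (hq : q.Prime)
    (u v : MonoidAlgebra ℤ G)
    (h : u - v ∈ addCommutatorSubgroup G ⊔ qMultiples G q) :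
    u ^ q - v ^ q ∈ addCommutatorSubgroup G ⊔ qMultiples G q := by
  set T := addCommutatorSubgroup G ⊔ qMultiples G q
  set ψ := MonoidAlgebra.mapDomainLinearMap ℤ ℤ (· ^ q : G → G)
  have hu : u ^ q - ψ u ∈ T := MonoidAlgebra.pow_sub_mapDomain_pow_mem
    commutator_mem_addCommutatorSubgroup_sup hq nsmul_mem_addCommutatorSubgroup_sup u
  have hv : v ^ q - ψ v ∈ T := MonoidAlgebra.pow_sub_mapDomain_pow_mem
    commutator_mem_addCommutatorSubgroup_sup hq nsmul_mem_addCommutatorSubgroup_sup v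
  have huv : ψ (u - v) ∈ T := mapDomain_pow_mem_addCommutatorSubgroup_sup q h
  convert T.add_mem (T.sub_mem hu hv) huv using 1
  rw [map_sub]
  abel

theorem stmt_7 {G : Type*} [Group G] [Fintype G] (q : ℕ) (hq : q.Prime)
    (u v : MonoidAlgebra ℤ G)
    (h : u - v ∈ addCommutatorSubgroup G ⊔ qMultiples G q) :
    u ^ q - v ^ q ∈ addCommutatorSubgroup G ⊔ qMultiples G q :=
  stmt_7_general q hq u v h
end
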